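/- Let N be a finite set with |N| = n ≥ 3. For any two simple graphs x and y on the vertex set N with identical degree distributions (n_j(x) = n_j(y) for all j ≥ 0), the number of subgraphs of x isomorphic to K_{n−1}∖{e} (the complete graph on n−1 vertices with one edge removed) equals the number of subgraphs of y isomorphic to K_{n−1}∖{e}. That is, σ_{K_{n−1}∖{e}}(x) is a function of the degree distribution of x alone. -/

import Mathlib

/-!
A copy of `K_{n-1}` minus an edge in `x` is determined by the vertex `v` it omits and the pair
`p ⊆ V ∖ {v}` it omits; it exists iff every non-edge of `x` avoiding `v` equals `p`. So for fixed
`v` the number of choices of `p` is `C(n-1, 2)`, `1` or `0` according as the number `m_v` of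
non-edges of `x` avoiding `v` is `0`, `1` or larger. Finally `m_v = |E(xᶜ)| - deg_{xᶜ} v`, and
both terms are read off the degree distribution: equal degree distributions give a permutation
`σ` of `V` with `deg_y (σ v) = deg_x v`, which transports `m_v` for `x` to `m_{σ v}` for `y`.
-/

/-- The number of (not necessarily induced) subgraphs of `x` isomorphic to `U`. -/
noncomputable def subCount {W V : Type*} (U : SimpleGraph W) (x : SimpleGraph V) : ℕ :=
  Nat.card {H : x.Subgraph // Nonempty (H.coe ≃g U)}

/-- The `k`-star: the vertex `0` (the hub) is adjacent to the `k` other vertices,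
and there are no other edges. -/
def starGraph (k : ℕ) : SimpleGraph (Fin (k + 1)) where
  Adj a b := a ≠ b ∧ (a = 0 ∨ b = 0)
  symm := by
    constructor
    rintro a b ⟨hne, h⟩
    exact ⟨hne.symm, h.symm⟩
  loopless := by
    constructor
    rintro a ⟨hne, _⟩
    exact hne rfl

/-- The disjoint union of two edges: four vertices and two edges sharing no endpoint. -/
def twoEdges : SimpleGraph (Fin 4) :=
  SimpleGraph.fromRel (fun a b => (a = 0 ∧ b = 1) ∨ (a = 2 ∧ b = 3))

/-- The complete graph on `m` vertices with one edge (between `0` and `1`) removed. -/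
def compMinusEdge (m : ℕ) : SimpleGraph (Fin m) :=
  (⊤ : SimpleGraph (Fin m)) \ SimpleGraph.fromRel (fun a b => a.val = 0 ∧ b.val = 1)

/-- The degree of the vertex `v` in the graph `x`. -/
noncomputable def deg {V : Type*} (x : SimpleGraph V) (v : V) : ℕ :=
  Nat.card {w : V // x.Adj v w}

/-- `nDeg x j` is the number of vertices of `x` having degree `j`
(the degree distribution of `x`). -/
noncomputable def nDeg {V : Type*} (x : SimpleGraph V) (j : ℕ) : ℕ :=
  Nat.card {v : V // deg x v = j}

open Finset SimpleGraph

section CompMinusEdge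

variable {W : Type*} {k : ℕ}

lemma compMinusEdge_adj (c d : Fin (k + 2)) :
    (compMinusEdge (k + 2)).Adj c d ↔ c ≠ d ∧ s(c, d) ≠ s(0, 1) := by
  have h0 : ∀ e : Fin (k + 2), e.val = 0 ↔ e = 0 := fun e => by rw [Fin.ext_iff, Fin.val_zero]
  have h1 : ∀ e : Fin (k + 2), e.val = 1 ↔ e = 1 := fun e => by rw [Fin.ext_iff, Fin.val_one]
  simp only [compMinusEdge, sdiff_adj, top_adj, fromRel_adj, h0, h1, ne_eq, Sym2.eq_iff]
  tauto

lemma compMinusEdge_adj_equiv (e : W ≃ Fin (k + 2)) (u w : W) :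
    (compMinusEdge (k + 2)).Adj (e u) (e w) ↔ u ≠ w ∧ s(u, w) ≠ s(e.symm 0, e.symm 1) := by
  have hmap : s(e u, e w) = s(0, 1) ↔ s(u, w) = s(e.symm 0, e.symm 1) := by
    rw [← (Sym2.map.injective e.injective).eq_iff]
    simp
  rw [compMinusEdge_adj, e.injective.ne_iff, ne_eq, ne_eq, hmap]

lemma exists_equiv_fin_symm_apply_zero_one [Finite W] (hW : Nat.card W = k + 2)
    {a b : W} (hab : a ≠ b) : ∃ e : W ≃ Fin (k + 2), e.symm 0 = a ∧ e.symm 1 = b := by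
  let e₁ := (Finite.equivFin W).trans (finCongr hW)
  let e₀ := e₁.trans (Equiv.swap (e₁ a) 0)
  have he₀ : e₀ a = 0 := by simp [e₀]
  have hb : e₀ b ≠ 0 := he₀ ▸ e₀.injective.ne hab.symm
  refine ⟨e₀.trans (Equiv.swap (e₀ b) 1), ?_, ?_⟩
  · rw [Equiv.symm_apply_eq, Equiv.trans_apply, he₀,
      Equiv.swap_apply_of_ne_of_ne hb.symm (by simp)]
  · simp

lemma nonempty_iso_compMinusEdge_iff [Finite W] (hW : Nat.card W = k + 2)
    (G : SimpleGraph W) :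
    Nonempty (G ≃g compMinusEdge (k + 2)) ↔
      ∃ a b : W, a ≠ b ∧ ∀ u w, G.Adj u w ↔ u ≠ w ∧ s(u, w) ≠ s(a, b) := by
  constructor
  · rintro ⟨φ⟩
    refine ⟨φ.symm 0, φ.symm 1, φ.symm.injective.ne (by simp), fun u w => ?_⟩
    rw [← φ.map_adj_iff]
    exact compMinusEdge_adj_equiv φ.toEquiv u w
  · rintro ⟨a, b, hab, hG⟩
    obtain ⟨e, rfl, rfl⟩ := exists_equiv_fin_symm_apply_zero_one hW hab
    exact ⟨⟨e, fun {u w} => (compMinusEdge_adj_equiv e u w).trans (hG u w).symm⟩⟩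

end CompMinusEdge

lemma Finset.card_filter_subset_singleton {α : Type*} [DecidableEq α] {s t : Finset α}
    (h : t ⊆ s) :
    #{p ∈ s | t ⊆ ({p} : Finset α)} = if #t = 0 then #s else if #t = 1 then 1 else 0 := by
  rcases Nat.lt_or_ge #t 2 with ht | ht
  · interval_cases hc : #t
    · simp [card_eq_zero.mp hc]
    · obtain ⟨q, rfl⟩ := card_eq_one.mp hc
      have hq : {p ∈ s | {q} ⊆ ({p} : Finset α)} = {q} := by
        ext p
        simp only [mem_filter, singleton_subset_iff, mem_singleton]
        exact ⟨fun hp => hp.2.symm, fun hp => ⟨hp ▸ h (mem_singleton_self q), hp.symm⟩⟩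
      rw [hq]
      simp
  · obtain ⟨q₁, h₁, q₂, h₂, hne⟩ := one_lt_card.mp ht
    rw [if_neg (by omega), if_neg (by omega), card_eq_zero, filter_eq_empty_iff]
    exact fun p _ hp => hne ((mem_singleton.mp (hp h₁)).trans (mem_singleton.mp (hp h₂)).symm)

lemma Set.exists_eq_compl_singleton_of_ncard {α : Type*} [Finite α] {s : Set α}
    (h : s.ncard + 1 = Nat.card α) : ∃ v, s = {v}ᶜ := by
  have hs := Set.ncard_add_ncard_compl s
  obtain ⟨v, hv⟩ := Set.ncard_eq_one.mp (by omega : sᶜ.ncard = 1)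
  exact ⟨v, by rw [← compl_compl s, hv]⟩

lemma exists_equiv_deg_eq_of_nDeg_eq {V : Type*} [Finite V] {x y : SimpleGraph V}
    (h : ∀ j, nDeg x j = nDeg y j) : ∃ σ : V ≃ V, ∀ v, deg y (σ v) = deg x v :=
  let e j : {v // deg x v = j} ≃ {v // deg y v = j} := (Finite.card_eq.mp (h j)).some
  ⟨Equiv.ofFiberEquiv e, Equiv.ofFiberEquiv_map e⟩

lemma deg_eq_degree {V : Type*} (x : SimpleGraph V) (v : V) [Fintype (x.neighborSet v)] :
    deg x v = x.degree v := by
  rw [deg, ← card_neighborSet_eq_degree, ← Nat.card_eq_fintype_card]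
  rfl

section DegreePreserving

variable {V : Type*} [Fintype V] {G H : SimpleGraph V}
  [DecidableRel G.Adj] [DecidableRel H.Adj] (σ : V ≃ V)

lemma card_edgeFinset_eq_of_degree_eq (hσ : ∀ v, H.degree (σ v) = G.degree v) :
    #G.edgeFinset = #H.edgeFinset := by
  have hsum : ∑ v, G.degree v = ∑ v, H.degree v := by
    rw [← Equiv.sum_comp σ fun v => H.degree v]
    exact sum_congr rfl fun v _ => (hσ v).symm
  rw [G.sum_degrees_eq_twice_card_edges, H.sum_degrees_eq_twice_card_edges] at hsum
  omega

lemma card_edgeFinset_deleteIncidenceSet_eq_of_degree_eq [DecidableEq V]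
    (hσ : ∀ v, H.degree (σ v) = G.degree v) (v : V) :
    #(G.deleteIncidenceSet v).edgeFinset = #(H.deleteIncidenceSet (σ v)).edgeFinset := by
  rw [card_edgeFinset_deleteIncidenceSet, card_edgeFinset_deleteIncidenceSet, hσ,
    card_edgeFinset_eq_of_degree_eq σ hσ]

end DegreePreserving

section AdmissiblePairs

variable {V : Type*} [Fintype V] [DecidableEq V] (x : SimpleGraph V) [DecidableRel x.Adj]

/-- `p ∈ admissiblePairs x v` iff the complete graph on `V ∖ {v}` with the edge `p` removed
is contained in `x`. -/
def admissiblePairs (v : V) : Finset (Sym2 V) :=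
  {p ∈ ((⊤ : SimpleGraph V).deleteIncidenceSet v).edgeFinset |
    (xᶜ.deleteIncidenceSet v).edgeFinset ⊆ ({p} : Finset (Sym2 V))}

variable {x}

lemma edgeFinset_deleteIncidenceSet_compl_subset (v : V) :
    (xᶜ.deleteIncidenceSet v).edgeFinset ⊆
      ((⊤ : SimpleGraph V).deleteIncidenceSet v).edgeFinset :=
  edgeFinset_subset_edgeFinset.mpr fun u w => by
    simp only [deleteIncidenceSet_adj, compl_adj, top_adj]
    exact fun h => ⟨h.1.1, h.2⟩

lemma mem_admissiblePairs {v : V} {p : Sym2 V} :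
    p ∈ admissiblePairs x v ↔ p ∈ ((⊤ : SimpleGraph V).deleteIncidenceSet v).edgeFinset ∧
      ∀ u w, u ≠ w → u ≠ v → w ≠ v → s(u, w) ≠ p → x.Adj u w := by
  rw [admissiblePairs, mem_filter]
  refine and_congr_right fun _ => ⟨fun h u w huw hu hw hp => ?_, fun h e he => ?_⟩
  · by_contra hx
    refine hp (mem_singleton.mp (h ?_))
    simp [deleteIncidenceSet_adj, huw, hu, hw, hx]
  · induction e using Sym2.ind with
    | _ u w =>
      simp only [mem_edgeFinset, mem_edgeSet, deleteIncidenceSet_adj, compl_adj] at he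
      by_contra hne
      exact he.1.2 (h u w he.1.1 he.2.1 he.2.2 (mem_singleton.not.mp hne))

lemma card_admissiblePairs_eq_of_degree_eq {y : SimpleGraph V} [DecidableRel y.Adj]
    (σ : V ≃ V) (hσ : ∀ v, y.degree (σ v) = x.degree v) (v : V) :
    #(admissiblePairs x v) = #(admissiblePairs y (σ v)) := by
  have htop := card_edgeFinset_deleteIncidenceSet_eq_of_degree_eq (G := ⊤) (H := ⊤) σ
    (fun v => by simp) v
  have hcompl := card_edgeFinset_deleteIncidenceSet_eq_of_degree_eq (G := xᶜ) (H := yᶜ) σ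
    (fun v => by simp [degree_compl, hσ]) v
  rw [admissiblePairs, admissiblePairs,
    card_filter_subset_singleton (edgeFinset_deleteIncidenceSet_compl_subset v),
    card_filter_subset_singleton (edgeFinset_deleteIncidenceSet_compl_subset (σ v)), htop, hcompl]

end AdmissiblePairs

section CliqueMinusEdgeSubgraph

variable {V : Type*} [Fintype V] [DecidableEq V] {x : SimpleGraph V} [DecidableRel x.Adj]
  {k : ℕ}

def cliqueMinusEdgeSubgraph {v : V} {p : Sym2 V} (h : p ∈ admissiblePairs x v) :
    x.Subgraph where
  verts := {v}ᶜ
  Adj u w := u ≠ w ∧ u ≠ v ∧ w ≠ v ∧ s(u, w) ≠ p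
  adj_sub := fun ⟨huw, hu, hw, hp⟩ => (mem_admissiblePairs.mp h).2 _ _ huw hu hw hp
  edge_vert := fun h => h.2.1
  symm := ⟨fun _ _ ⟨huw, hu, hw, hp⟩ => ⟨huw.symm, hw, hu, Sym2.eq_swap ▸ hp⟩⟩

@[simp] lemma cliqueMinusEdgeSubgraph_verts {v : V} {p : Sym2 V} (h : p ∈ admissiblePairs x v) :
    (cliqueMinusEdgeSubgraph h).verts = {v}ᶜ := rfl

@[simp] lemma cliqueMinusEdgeSubgraph_adj {v : V} {p : Sym2 V} (h : p ∈ admissiblePairs x v)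
    {u w : V} : (cliqueMinusEdgeSubgraph h).Adj u w ↔ u ≠ w ∧ u ≠ v ∧ w ≠ v ∧ s(u, w) ≠ p :=
  Iff.rfl

lemma nonempty_iso_cliqueMinusEdgeSubgraph (hV : Fintype.card V = k + 3) {v : V} {p : Sym2 V}
    (h : p ∈ admissiblePairs x v) :
    Nonempty ((cliqueMinusEdgeSubgraph h).coe ≃g compMinusEdge (k + 2)) := by
  have hcard : Nat.card (cliqueMinusEdgeSubgraph h).verts = k + 2 := by
    rw [Nat.card_coe_set_eq, cliqueMinusEdgeSubgraph_verts, Set.ncard_compl, Set.ncard_singleton,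
      Nat.card_eq_fintype_card, hV]
    rfl
  have hp := (mem_admissiblePairs.mp h).1
  induction p using Sym2.ind with
  | _ a b =>
    simp only [mem_edgeFinset, mem_edgeSet, deleteIncidenceSet_adj, top_adj] at hp
    rw [nonempty_iso_compMinusEdge_iff hcard]
    refine ⟨⟨a, hp.2.1⟩, ⟨b, hp.2.2⟩, Subtype.coe_ne_coe.mp hp.1, fun u w => ?_⟩
    have hu : (u : V) ≠ v := u.2
    have hw : (w : V) ≠ v := w.2
    simp only [Subgraph.coe_adj, cliqueMinusEdgeSubgraph_adj, ne_eq, Sym2.eq_iff,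
      Subtype.ext_iff]
    tauto

lemma cliqueMinusEdgeSubgraph_inj {v v' : V} {p p' : Sym2 V} (h : p ∈ admissiblePairs x v)
    (h' : p' ∈ admissiblePairs x v')
    (heq : cliqueMinusEdgeSubgraph h = cliqueMinusEdgeSubgraph h') : v = v' ∧ p = p' := by
  have hv : v = v' := by
    simpa using congrArg Subgraph.verts heq
  subst hv
  refine ⟨rfl, ?_⟩
  have hp := (mem_admissiblePairs.mp h).1
  induction p using Sym2.ind with
  | _ a b =>
    simp only [mem_edgeFinset, mem_edgeSet, deleteIncidenceSet_adj, top_adj] at hp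
    by_contra hne
    have hadj : (cliqueMinusEdgeSubgraph h').Adj a b := by simp [hp, hne]
    rw [← heq] at hadj
    exact hadj.2.2.2 rfl

lemma exists_cliqueMinusEdgeSubgraph_eq (hV : Fintype.card V = k + 3) (H : x.Subgraph)
    (hH : Nonempty (H.coe ≃g compMinusEdge (k + 2))) :
    ∃ (v : V) (p : Sym2 V) (h : p ∈ admissiblePairs x v), cliqueMinusEdgeSubgraph h = H := by
  obtain ⟨φ⟩ := hH
  have hcard : Nat.card H.verts = k + 2 := by simp [Nat.card_congr φ.toEquiv]
  obtain ⟨v, hv⟩ := Set.exists_eq_compl_singleton_of_ncard (s := H.verts)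
    (by rw [← Nat.card_coe_set_eq, hcard, Nat.card_eq_fintype_card, hV])
  obtain ⟨a, b, hab, hadj⟩ := (nonempty_iso_compMinusEdge_iff hcard H.coe).mp ⟨φ⟩
  have hmem : ∀ u, u ∈ H.verts ↔ u ≠ v := fun u => by simp [hv]
  have hHadj : ∀ u w, H.Adj u w ↔ u ≠ w ∧ u ≠ v ∧ w ≠ v ∧ s(u, w) ≠ s(↑a, ↑b) := by
    intro u w
    constructor
    · intro huw
      have hu := H.edge_vert huw
      have hw := H.edge_vert huw.symm
      have := (hadj ⟨u, hu⟩ ⟨w, hw⟩).mp huw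
      refine ⟨huw.ne, (hmem u).mp hu, (hmem w).mp hw, ?_⟩
      simpa [Sym2.eq_iff, Subtype.ext_iff] using this.2
    · rintro ⟨huw, hu, hw, hp⟩
      refine (hadj ⟨u, (hmem u).mpr hu⟩ ⟨w, (hmem w).mpr hw⟩).mpr ⟨?_, ?_⟩
      · simpa [Subtype.ext_iff] using huw
      · simpa [Sym2.eq_iff, Subtype.ext_iff] using hp
  have hp : s(↑a, ↑b) ∈ admissiblePairs x v := by
    refine mem_admissiblePairs.mpr ⟨?_, fun u w huw hu hw hp => ?_⟩
    · simp [deleteIncidenceSet_adj, Subtype.coe_ne_coe.mpr hab, (hmem a).mp a.2, (hmem b).mp b.2]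
    · exact H.adj_sub ((hHadj u w).mpr ⟨huw, hu, hw, hp⟩)
  refine ⟨v, _, hp, Subgraph.ext hv.symm ?_⟩
  funext u w
  exact propext (hHadj u w).symm

lemma subCount_compMinusEdge_eq_sum (hV : Fintype.card V = k + 3) :
    subCount (compMinusEdge (k + 2)) x = ∑ v, #(admissiblePairs x v) := by
  let f : (Σ v, admissiblePairs x v) →
      {H : x.Subgraph // Nonempty (H.coe ≃g compMinusEdge (k + 2))} :=
    fun q => ⟨cliqueMinusEdgeSubgraph q.2.2, nonempty_iso_cliqueMinusEdgeSubgraph hV q.2.2⟩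
  have hf : f.Bijective := by
    refine ⟨fun ⟨v, p, h⟩ ⟨v', p', h'⟩ heq => ?_, fun ⟨H, hH⟩ => ?_⟩
    · obtain ⟨rfl, rfl⟩ := cliqueMinusEdgeSubgraph_inj h h' (congrArg Subtype.val heq)
      rfl
    · obtain ⟨v, p, h, rfl⟩ := exists_cliqueMinusEdgeSubgraph_eq hV H hH
      exact ⟨⟨v, p, h⟩, rfl⟩
  rw [subCount, ← Nat.card_eq_of_bijective f hf, Nat.card_sigma]
  simp

end CliqueMinusEdgeSubgraph

theorem stmt7_general {V : Type*} [Fintype V] (hn : 3 ≤ Fintype.card V)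
    (x y : SimpleGraph V) (hdeg : ∀ j : ℕ, nDeg x j = nDeg y j) :
    subCount (compMinusEdge (Fintype.card V - 1)) x
      = subCount (compMinusEdge (Fintype.card V - 1)) y := by
  classical
  obtain ⟨k, hV⟩ : ∃ k, Fintype.card V = k + 3 := ⟨Fintype.card V - 3, by omega⟩
  obtain ⟨σ, hσ⟩ := exists_equiv_deg_eq_of_nDeg_eq hdeg
  simp only [deg_eq_degree] at hσ
  rw [show Fintype.card V - 1 = k + 2 by omega, subCount_compMinusEdge_eq_sum hV,
    subCount_compMinusEdge_eq_sum hV, ← Equiv.sum_comp σ fun v => #(admissiblePairs y v)]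
  exact sum_congr rfl fun v _ => card_admissiblePairs_eq_of_degree_eq σ hσ v

/-- If `|N| = n ≥ 3` and `x`, `y` are simple graphs on `N` with identical
degree distributions, then they contain the same number of subgraphs isomorphic to
`K_{n−1}` with one edge removed. -/
theorem stmt7 {V : Type*} [Fintype V] [DecidableEq V] (hn : 3 ≤ Fintype.card V)
    (x y : SimpleGraph V) (hdeg : ∀ j : ℕ, nDeg x j = nDeg y j) :
    subCount (compMinusEdge (Fintype.card V - 1)) x
      = subCount (compMinusEdge (Fintype.card V - 1)) y :=
  stmt7_general hn x y hdeg
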